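/- Let M be a metric space with base point 0 and let μ ∈ S_{F(M)} be a Δ-point of the Banach space F(M). Then for every ε > 0 and every slice S of B_{F(M)} with μ ∈ S there exists a sequence of molecules (m_{u_iv_i})_{i∈ℕ} contained in S such that ‖m_{u_iv_i} − m_{u_jv_j}‖ ≥ 2 − ε for all i, j ∈ ℕ with i ≠ j. -/

import Mathlib

open Metric Set Filter NNReal

noncomputable section

/-- The topological dual of a seminormed space (the old Mathlib `NormedSpace.Dual`). -/
abbrev NormedSpace.Dual (𝕜 : Type*) [NontriviallyNormedField 𝕜] (E : Type*)
    [SeminormedAddCommGroup E] [NormedSpace 𝕜 E] : Type _ := E →L[𝕜] 𝕜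

namespace DeltaPaper

/-! ### Generic Banach space notions -/

variable {X : Type*} [NormedAddCommGroup X] [NormedSpace ℝ X]

/-- `x` is a Daugavet-point: every slice of the unit ball contains, for every `ε > 0`,
an element at distance at least `2 - ε` from `x`. -/
def IsDaugavetPoint (x : X) : Prop :=
  ∀ (φ : NormedSpace.Dual ℝ X) (α : ℝ), ‖φ‖ = 1 → 0 < α → ∀ ε > 0,
    ∃ y : X, ‖y‖ ≤ 1 ∧ 1 - α < φ y ∧ 2 - ε ≤ ‖x - y‖

/-- `x` is a Δ-point: every slice of the unit ball containing `x` contains, for every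
`ε > 0`, an element at distance at least `2 - ε` from `x`. -/
def IsDeltaPoint (x : X) : Prop :=
  ∀ (φ : NormedSpace.Dual ℝ X) (α : ℝ), ‖φ‖ = 1 → 0 < α → 1 - α < φ x → ∀ ε > 0,
    ∃ y : X, ‖y‖ ≤ 1 ∧ 1 - α < φ y ∧ 2 - ε ≤ ‖x - y‖

/-- `x*` is a w*-Daugavet-point of the dual of `X`. -/
def IsWeakStarDaugavetPoint (f : NormedSpace.Dual ℝ X) : Prop :=
  ∀ (x : X) (α : ℝ), ‖x‖ = 1 → 0 < α → ∀ ε > 0,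
    ∃ g : NormedSpace.Dual ℝ X, ‖g‖ ≤ 1 ∧ 1 - α < g x ∧ 2 - ε ≤ ‖f - g‖

/-- `x*` is a w*-Δ-point of the dual of `X`. -/
def IsWeakStarDeltaPoint (f : NormedSpace.Dual ℝ X) : Prop :=
  ∀ (x : X) (α : ℝ), ‖x‖ = 1 → 0 < α → 1 - α < f x → ∀ ε > 0,
    ∃ g : NormedSpace.Dual ℝ X, ‖g‖ ≤ 1 ∧ 1 - α < g x ∧ 2 - ε ≤ ‖f - g‖

/-- `x` is a denting point of the unit ball: it lies in slices of the unit ball of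
arbitrarily small diameter. -/
def IsDentingPoint (x : X) : Prop :=
  ‖x‖ ≤ 1 ∧ ∀ ε > 0, ∃ (φ : NormedSpace.Dual ℝ X) (α : ℝ), ‖φ‖ = 1 ∧ 0 < α ∧
    1 - α < φ x ∧ Metric.diam {y : X | ‖y‖ ≤ 1 ∧ 1 - α < φ y} < ε

/-- The Kuratowski measure of non-compactness of a set: the infimum of all `ε > 0`
such that the set can be covered by finitely many sets of diameter less than `ε`. -/
def kuratowski {Y : Type*} [PseudoMetricSpace Y] (A : Set Y) : ℝ :=
  sInf {ε : ℝ | 0 < ε ∧ ∃ 𝒞 : Finset (Set Y), (A ⊆ ⋃ B ∈ 𝒞, B) ∧ ∀ B ∈ 𝒞, Metric.diam B < ε}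

/-! ### The space of Lipschitz functions vanishing at a base point -/

variable {M : Type*} [PseudoMetricSpace M]

/-- The least Lipschitz constant of a function. -/
def lipConst (f : M → ℝ) : ℝ≥0 := sInf {K | LipschitzWith K f}

theorem lipschitzWith_lipConst {f : M → ℝ} (hf : ∃ K, LipschitzWith K f) :
    LipschitzWith (lipConst f) f := by
  obtain ⟨K₀, hK₀⟩ := hf
  rw [lipschitzWith_iff_dist_le_mul]
  intro x y
  rcases le_or_gt (dist x y) 0 with h | h
  · have h0 : dist x y = 0 := le_antisymm h dist_nonneg
    have := hK₀.dist_le_mul x y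
    rw [h0, mul_zero] at this ⊢
    exact this
  · rw [← div_le_iff₀ h]
    have hnn : 0 ≤ dist (f x) (f y) / dist x y := by positivity
    rw [← Real.coe_toNNReal _ hnn, NNReal.coe_le_coe]
    refine le_csInf ⟨K₀, hK₀⟩ ?_
    intro K hK
    rw [← NNReal.coe_le_coe, Real.coe_toNNReal _ hnn, div_le_iff₀ h]
    exact hK.dist_le_mul x y

theorem lipConst_le {f : M → ℝ} {K : ℝ≥0} (hK : LipschitzWith K f) : lipConst f ≤ K :=
  csInf_le (OrderBot.bddBelow _) hK

theorem lipschitzWith_smul {f : M → ℝ} {K : ℝ≥0} (hK : LipschitzWith K f) (c : ℝ) :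
    LipschitzWith (‖c‖₊ * K) (c • f) := by
  rw [lipschitzWith_iff_dist_le_mul] at *
  intro x y
  have : dist ((c • f) x) ((c • f) y) = ‖c‖ * dist (f x) (f y) := by
    simp only [Pi.smul_apply, smul_eq_mul, Real.dist_eq, ← mul_sub, abs_mul, Real.norm_eq_abs]
  rw [this, NNReal.coe_mul, coe_nnnorm, mul_assoc]
  exact mul_le_mul_of_nonneg_left (hK x y) (norm_nonneg c)

variable (M) in
/-- The submodule of `M → ℝ` consisting of Lipschitz functions vanishing at the
base point `z`. -/
def Lip0 (z : M) : Submodule ℝ (M → ℝ) where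
  carrier := {f | (∃ K, LipschitzWith K f) ∧ f z = 0}
  add_mem' := by
    rintro f g ⟨⟨K, hK⟩, hf0⟩ ⟨⟨L, hL⟩, hg0⟩
    exact ⟨⟨K + L, hK.add hL⟩, by simp [hf0, hg0]⟩
  zero_mem' := ⟨⟨0, LipschitzWith.const' 0⟩, rfl⟩
  smul_mem' := by
    rintro c f ⟨⟨K, hK⟩, hf0⟩
    exact ⟨⟨‖c‖₊ * K, lipschitzWith_smul hK c⟩, by simp [hf0]⟩

variable {z : M}

instance : NormedAddCommGroup ↥(Lip0 M z) :=
  AddGroupNorm.toNormedAddCommGroup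
    { toFun := fun f => ((lipConst (f : M → ℝ) : ℝ≥0) : ℝ)
      map_zero' := by
        have h0 : lipConst (0 : M → ℝ) = 0 :=
          le_antisymm (lipConst_le (by simpa using LipschitzWith.const' (0 : ℝ))) bot_le
        show ((lipConst ((0 : ↥(Lip0 M z)) : M → ℝ) : ℝ≥0) : ℝ) = 0
        rw [show ((0 : ↥(Lip0 M z)) : M → ℝ) = 0 from rfl, h0, NNReal.coe_zero]
      add_le' := by
        intro f g
        have hf := lipschitzWith_lipConst f.2.1
        have hg := lipschitzWith_lipConst g.2.1
        have : lipConst ((f + g : ↥(Lip0 M z)) : M → ℝ) ≤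
            lipConst (f : M → ℝ) + lipConst (g : M → ℝ) := by
          refine lipConst_le ?_
          have := hf.add hg
          convert this using 1
          all_goals rfl
        exact_mod_cast this
      neg' := by
        intro f
        show ((lipConst ((-f : ↥(Lip0 M z)) : M → ℝ) : ℝ≥0) : ℝ) = _
        rw [show ((-f : ↥(Lip0 M z)) : M → ℝ) = -(f : M → ℝ) from rfl]
        unfold lipConst
        congr 2
        ext K
        exact ⟨fun hK => by simpa using hK.neg, fun hK => hK.neg⟩
      eq_zero_of_map_eq_zero' := by
        intro f hf
        replace hf : ((lipConst (f : M → ℝ) : ℝ≥0) : ℝ) = 0 := hf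
        have h0 : lipConst (f : M → ℝ) = 0 := by exact_mod_cast hf
        have hl : LipschitzWith 0 (f : M → ℝ) := h0 ▸ lipschitzWith_lipConst f.2.1
        ext x
        have := hl.dist_le_mul x z
        simp only [NNReal.coe_zero, zero_mul] at this
        have hxz : (f : M → ℝ) x = (f : M → ℝ) z :=
          dist_le_zero.mp this
        simpa [f.2.2] using hxz }

theorem Lip0.norm_def (f : ↥(Lip0 M z)) : ‖f‖ = ((lipConst (f : M → ℝ) : ℝ≥0) : ℝ) := rfl

theorem Lip0.lipschitzWith (f : ↥(Lip0 M z)) : LipschitzWith (lipConst (f : M → ℝ)) (f : M → ℝ) :=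
  lipschitzWith_lipConst f.2.1

instance : NormedSpace ℝ ↥(Lip0 M z) where
  norm_smul_le c f := by
    have : lipConst ((c • f : ↥(Lip0 M z)) : M → ℝ) ≤ ‖c‖₊ * lipConst (f : M → ℝ) :=
      lipConst_le (lipschitzWith_smul (Lip0.lipschitzWith f) c)
    calc ‖c • f‖ = ((lipConst ((c • f : ↥(Lip0 M z)) : M → ℝ) : ℝ≥0) : ℝ) := rfl
      _ ≤ ((‖c‖₊ * lipConst (f : M → ℝ) : ℝ≥0) : ℝ) := by exact_mod_cast this
      _ = ‖c‖ * ‖f‖ := by push_cast [Lip0.norm_def]; rfl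

variable (M z) in
/-- The evaluation functional `δ_x ∈ Lip₀(M)*`. -/
def evalδ (x : M) : NormedSpace.Dual ℝ ↥(Lip0 M z) :=
  LinearMap.mkContinuous
    ({ toFun := fun f => (f : M → ℝ) x
       map_add' := fun f g => rfl
       map_smul' := fun c f => rfl } : ↥(Lip0 M z) →ₗ[ℝ] ℝ)
    (dist x z)
    (by
      intro f
      have := (Lip0.lipschitzWith f).dist_le_mul x z
      simp only [f.2.2, Real.dist_eq, sub_zero] at this
      calc ‖(f : M → ℝ) x‖ = |(f : M → ℝ) x - 0| := by simp
        _ ≤ (lipConst (f : M → ℝ) : ℝ) * dist x z := by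
            simpa [f.2.2, Real.dist_eq] using (Lip0.lipschitzWith f).dist_le_mul x z
        _ = dist x z * ‖f‖ := by rw [Lip0.norm_def, mul_comm])

variable (M z) in
/-- The Lipschitz-free space over `M`: the closed linear span of the evaluation
functionals inside `Lip₀(M)*`. -/
def FreeSpace : Submodule ℝ (NormedSpace.Dual ℝ ↥(Lip0 M z)) :=
  (Submodule.span ℝ (Set.range (evalδ M z))).topologicalClosure

/-- The operator norm on `F(M)*` (found automatically by the older Mathlib). -/
instance : Norm (NormedSpace.Dual ℝ ↥(FreeSpace M z)) := ContinuousLinearMap.hasOpNorm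

variable (M z) in
/-- The molecule `m_{x y} = (δ_x - δ_y)/d(x,y)` as an element of `Lip₀(M)*`. -/
def molecule (x y : M) : NormedSpace.Dual ℝ ↥(Lip0 M z) :=
  (dist x y)⁻¹ • (evalδ M z x - evalδ M z y)

theorem molecule_mem_freeSpace (x y : M) : molecule M z x y ∈ FreeSpace M z :=
  Submodule.le_topologicalClosure _
    (Submodule.smul_mem _ _ (Submodule.sub_mem _
      (Submodule.subset_span ⟨x, rfl⟩) (Submodule.subset_span ⟨y, rfl⟩)))

variable (M z) in
/-- The molecule `m_{x y}` as an element of the free space `F(M)`. -/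
def mol (x y : M) : ↥(FreeSpace M z) := ⟨molecule M z x y, molecule_mem_freeSpace x y⟩

variable (M) in
/-- A metric space is uniformly discrete if distances between distinct points are
bounded below by a positive constant. -/
def UniformlyDiscrete : Prop := ∃ θ > (0:ℝ), ∀ x y : M, x ≠ y → θ ≤ dist x y

/-- A norm-one Lipschitz function is local if its Lipschitz constant is approximated
on pairs of arbitrarily close points. -/
def IsLocal (f : ↥(Lip0 M z)) : Prop :=
  ∀ ε > 0, ∃ u v : M, u ≠ v ∧
    ‖f‖ - ε < ((f : M → ℝ) u - (f : M → ℝ) v) / dist u v ∧ dist u v < ε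

/-- `f ∈ S_{Lip₀(M)}` is a w*-Daugavet-point: for every w*-slice `S(μ, α)` of
`B_{Lip₀(M)}` (`μ` a norm-one element of `F(M)`) and every `ε > 0` there is `g` in the
slice with `‖f - g‖ ≥ 2 - ε`. -/
def IsLipWeakStarDaugavetPoint (f : ↥(Lip0 M z)) : Prop :=
  ∀ μ : NormedSpace.Dual ℝ ↥(Lip0 M z), μ ∈ FreeSpace M z → ‖μ‖ = 1 → ∀ α > (0:ℝ), ∀ ε > (0:ℝ),
    ∃ g : ↥(Lip0 M z), ‖g‖ ≤ 1 ∧ 1 - α < μ g ∧ 2 - ε ≤ ‖f - g‖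

/-- `f ∈ S_{Lip₀(M)}` is a w*-Δ-point: the same as above, but only for w*-slices
containing `f`. -/
def IsLipWeakStarDeltaPoint (f : ↥(Lip0 M z)) : Prop :=
  ∀ μ : NormedSpace.Dual ℝ ↥(Lip0 M z), μ ∈ FreeSpace M z → ‖μ‖ = 1 → ∀ α > (0:ℝ),
    1 - α < μ f → ∀ ε > (0:ℝ),
    ∃ g : ↥(Lip0 M z), ‖g‖ ≤ 1 ∧ 1 - α < μ g ∧ 2 - ε ≤ ‖f - g‖

end DeltaPaper

open DeltaPaper NormedSpace

/-!
The molecules are built inductively together with functionals `fₖ` of norm at most one with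
`fₖ μ ≈ 1`. At step `k` the Δ-point property, applied to `Ψₖ = l • φ + ∑ i < k, fᵢ`, gives `y`
in the unit ball with `Ψₖ y ≈ Ψₖ μ` and `‖μ - y‖ ≈ 2`; a functional `fₖ` norming `μ - y` then has
`fₖ μ ≈ 1` and `fₖ y ≈ -1`. Since molecules norm `F(M)*`, some molecule `mₖ` almost attains
`‖Ψₖ - fₖ‖ ≥ (Ψₖ - fₖ) y ≈ l + k + 1`. Each summand of `(Ψₖ - fₖ) mₖ` is bounded by its weight, so
all of them are nearly maximal: `φ mₖ > 1 - α`, `fᵢ mₖ ≈ 1` for `i < k` and `fₖ mₖ ≈ -1`. Hence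
`‖mᵢ - mⱼ‖ ≥ fᵢ (mⱼ - mᵢ) ≈ 2` for `i < j`.
-/

theorem Finset.sub_lt_of_sum_sub_lt_sum {ι : Type*} {t : Finset ι} {a b : ι → ℝ} {η : ℝ}
    (hab : ∀ i ∈ t, a i ≤ b i) (h : ∑ i ∈ t, b i - η < ∑ i ∈ t, a i) {j : ι} (hj : j ∈ t) :
    b j - η < a j := by
  classical
  rw [← Finset.add_sum_erase t a hj, ← Finset.add_sum_erase t b hj] at h
  have := Finset.sum_le_sum fun i (hi : i ∈ t.erase j) => hab i (Finset.mem_of_mem_erase hi)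
  linarith

theorem exists_seq_of_forall_exists_add_sum {A B : Type*} [AddCommMonoid A] (a₀ : A)
    {P : ℕ → A → A → B → Prop} (h : ∀ k a, ∃ b c, P k a b c) :
    ∃ (b : ℕ → A) (c : ℕ → B), ∀ k, P k (a₀ + ∑ i ∈ Finset.range k, b i) (b k) (c k) := by
  choose b c hbc using h
  let a : ℕ → A := fun k => Nat.rec a₀ (fun k ak => ak + b k ak) k
  have ha : ∀ k, a k = a₀ + ∑ i ∈ Finset.range k, b i (a i) := by
    intro k
    induction k with
    | zero => simp [a]
    | succ k ih => rw [Finset.sum_range_succ, ← add_assoc, ← ih]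
  exact ⟨fun k => b k (a k), fun k => c k (a k), fun k => ha k ▸ hbc k (a k)⟩

section

variable {X : Type*} [NormedAddCommGroup X] [NormedSpace ℝ X]

/-- Only levels `c ≥ 0` are required, so that the empty set norms the zero space. -/
def IsNorming (s : Set X) : Prop :=
  ∀ ψ : Dual ℝ X, ∀ c, 0 ≤ c → c < ‖ψ‖ → ∃ x ∈ s, c < ψ x

theorem IsNorming.exists_lt_apply [Nontrivial X] {s : Set X} (hs : IsNorming s)
    (ψ : Dual ℝ X) {c : ℝ} (hc : c < ‖ψ‖) : ∃ x ∈ s, c < ψ x := by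
  rcases le_or_gt 0 c with hc0 | hc0
  · exact hs ψ c hc0 hc
  rcases eq_or_ne ψ 0 with rfl | hψ
  · obtain ⟨x₀, -⟩ := exists_ne (0 : X)
    obtain ⟨g, hg, -⟩ := exists_dual_vector' (𝕜 := ℝ) x₀
    obtain ⟨x, hx, -⟩ := hs g 0 le_rfl (by simp [hg])
    exact ⟨x, hx, by simpa using hc0⟩
  · obtain ⟨x, hx, hψx⟩ := hs ψ 0 le_rfl (norm_pos_iff.mpr hψ)
    exact ⟨x, hx, hc0.trans hψx⟩

theorem abs_apply_le_one {f : Dual ℝ X} (hf : ‖f‖ ≤ 1) {x : X} (hx : ‖x‖ ≤ 1) : |f x| ≤ 1 := by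
  simpa using (f.le_of_opNorm_le hf x).trans (by rwa [one_mul])

theorem lt_apply_of_add_sum_sub_lt {ι : Type*} {t : Finset ι} {φ g : Dual ℝ X}
    {f : ι → Dual ℝ X} {x : X} {l η : ℝ} (hx : ‖x‖ ≤ 1) (hφ : ‖φ‖ ≤ 1)
    (hf : ∀ i ∈ t, ‖f i‖ ≤ 1) (hg : ‖g‖ ≤ 1) (hl : 0 ≤ l)
    (h : l + t.card + 1 - η < l * φ x + ∑ i ∈ t, f i x - g x) :
    l - η < l * φ x ∧ (∀ i ∈ t, 1 - η < f i x) ∧ g x < -(1 - η) := by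
  have hfx : ∀ i ∈ t, f i x ≤ 1 := fun i hi => (abs_le.mp (abs_apply_le_one (hf i hi) hx)).2
  have hsum : ∑ i ∈ t, f i x ≤ t.card := by simpa using Finset.sum_le_sum hfx
  have hφx := mul_le_of_le_one_right hl (abs_le.mp (abs_apply_le_one hφ hx)).2
  have hgx := abs_le.mp (abs_apply_le_one hg hx)
  refine ⟨by linarith, fun i hi => ?_, by linarith⟩
  refine Finset.sub_lt_of_sum_sub_lt_sum (b := fun _ => 1) hfx ?_ hi
  simp only [Finset.sum_const, nsmul_eq_mul, mul_one]
  linarith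

theorem pairwise_two_sub_le_norm_sub {f : ℕ → Dual ℝ X} {m : ℕ → X} {η : ℝ}
    (hf : ∀ i, ‖f i‖ ≤ 1) (hlt : ∀ i j, i < j → 1 - η < f i (m j))
    (hself : ∀ i, f i (m i) < -(1 - η)) :
    Pairwise fun i j => 2 - 2 * η ≤ ‖m i - m j‖ := by
  have key : ∀ i j, i < j → 2 - 2 * η ≤ ‖m i - m j‖ := fun i j hij => by
    have := (le_abs_self _).trans ((f i).le_of_opNorm_le (hf i) (m j - m i))
    rw [map_sub, one_mul, norm_sub_rev] at this
    linarith [hlt i j hij, hself i]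
  intro i j hij
  rcases hij.lt_or_gt with hij | hij
  · exact key i j hij
  · exact norm_sub_rev (m i) (m j) ▸ key j i hij

end

namespace DeltaPaper

section FreeSpace

variable {M : Type*} [MetricSpace M] {z : M}

theorem evalδ_mem_freeSpace (x : M) : evalδ M z x ∈ FreeSpace M z :=
  Submodule.le_topologicalClosure _ (Submodule.subset_span ⟨x, rfl⟩)

variable (M z) in
def freeδ (x : M) : FreeSpace M z := ⟨evalδ M z x, evalδ_mem_freeSpace x⟩

variable (M z) in
def molecules : Set (FreeSpace M z) := {m | ∃ u v, u ≠ v ∧ mol M z u v = m}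

theorem freeδ_base : freeδ M z z = 0 :=
  Subtype.ext <| DFunLike.ext _ _ fun f => f.2.2

theorem mol_eq_smul_sub (x y : M) :
    mol M z x y = (dist x y)⁻¹ • (freeδ M z x - freeδ M z y) := rfl

theorem norm_evalδ_sub_le (x y : M) : ‖evalδ M z x - evalδ M z y‖ ≤ dist x y := by
  refine ContinuousLinearMap.opNorm_le_bound _ dist_nonneg fun f => ?_
  rw [mul_comm, Lip0.norm_def, Real.norm_eq_abs]
  exact (Lip0.lipschitzWith f).dist_le_mul x y

theorem norm_mol_le (x y : M) : ‖mol M z x y‖ ≤ 1 := by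
  change ‖(dist x y)⁻¹ • (evalδ M z x - evalδ M z y)‖ ≤ 1
  rw [norm_smul, norm_inv, Real.norm_of_nonneg dist_nonneg]
  exact inv_mul_le_one_of_le₀ (norm_evalδ_sub_le x y) dist_nonneg

theorem FreeSpace.dual_ext {ψ ψ' : Dual ℝ (FreeSpace M z)}
    (h : ∀ x, ψ (freeδ M z x) = ψ' (freeδ M z x)) : ψ = ψ' := by
  set E := (LinearMap.eqLocus (ψ : FreeSpace M z →ₗ[ℝ] ℝ) ψ').map (FreeSpace M z).subtype
  have hE : IsClosed (E : Set (Dual ℝ (Lip0 M z))) :=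
    (Submodule.span ℝ (range (evalδ M z))).isClosed_topologicalClosure
      |>.isClosedEmbedding_subtypeVal.isClosedMap _ (isClosed_eq ψ.continuous ψ'.continuous)
  have hspan : Submodule.span ℝ (range (evalδ M z)) ≤ E :=
    Submodule.span_le.mpr <| by rintro _ ⟨x, rfl⟩; exact ⟨freeδ M z x, h x, rfl⟩
  ext ν
  obtain ⟨ν', hν', hνν'⟩ := Submodule.topologicalClosure_minimal _ hspan hE ν.2
  exact Subtype.ext hνν' ▸ hν'

/-- `ψ` is evaluation at the function `x ↦ ψ δₓ`, whose Lipschitz constant is the supremum of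
`ψ` over the molecules. -/
theorem norm_le_of_forall_apply_mol_le (ψ : Dual ℝ (FreeSpace M z)) {c : ℝ} (hc : 0 ≤ c)
    (h : ∀ u v, u ≠ v → ψ (mol M z u v) ≤ c) : ‖ψ‖ ≤ c := by
  set g : M → ℝ := fun x => ψ (freeδ M z x)
  have hg : LipschitzWith c.toNNReal g := by
    refine LipschitzWith.of_le_add_mul' c fun x y => ?_
    rcases eq_or_ne x y with rfl | hxy
    · simp
    · have := h x y hxy
      rw [mol_eq_smul_sub, map_smul, map_sub, smul_eq_mul, inv_mul_le_iff₀ (dist_pos.mpr hxy)]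
        at this
      linarith
  let G : Lip0 M z := ⟨g, ⟨_, hg⟩, by simp [g, freeδ_base]⟩
  have hG : ‖G‖ ≤ c := by
    rw [Lip0.norm_def, ← Real.coe_toNNReal c hc, NNReal.coe_le_coe]
    exact lipConst_le hg
  have hψ : ψ = (ContinuousLinearMap.apply ℝ ℝ G).comp (FreeSpace M z).subtypeL :=
    FreeSpace.dual_ext fun x => rfl
  refine ContinuousLinearMap.opNorm_le_bound _ hc fun ν => ?_
  calc ‖ψ ν‖ = ‖(ν : Dual ℝ (Lip0 M z)) G‖ := by rw [hψ]; rfl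
    _ ≤ ‖ν‖ * ‖G‖ := (ν : Dual ℝ (Lip0 M z)).le_opNorm G
    _ ≤ c * ‖ν‖ := by rw [mul_comm]; gcongr

theorem isNorming_molecules : IsNorming (molecules M z) := by
  intro ψ c hc hψ
  by_contra! h
  exact hψ.not_ge <| norm_le_of_forall_apply_mol_le ψ hc fun u v huv => h _ ⟨u, v, huv, rfl⟩

end FreeSpace

end DeltaPaper

namespace DeltaPaper.IsDeltaPoint

variable {X : Type*} [NormedAddCommGroup X] [NormedSpace ℝ X] {μ : X}

theorem exists_far_of_sub_lt_apply (hΔ : IsDeltaPoint μ) (hμ : ‖μ‖ = 1) (Ψ : Dual ℝ X)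
    {δ : ℝ} (hδ : 0 < δ) : ∃ y, ‖y‖ ≤ 1 ∧ Ψ μ - δ < Ψ y ∧ 2 - δ ≤ ‖μ - y‖ := by
  rcases eq_or_ne Ψ 0 with rfl | hΨ
  · refine ⟨-μ, by simp [hμ], by simpa using hδ, ?_⟩
    rw [sub_neg_eq_add, ← two_smul ℝ μ, norm_smul, hμ, Real.norm_two]
    linarith
  have hΨpos := norm_pos_iff.mpr hΨ
  have hΨμ : Ψ μ ≤ ‖Ψ‖ := by simpa [hμ] using (Ψ.le_opNorm μ).trans' (le_abs_self _)
  have hslice : 1 - (1 - (Ψ μ - δ) / ‖Ψ‖) < (‖Ψ‖⁻¹ • Ψ) μ := by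
    simp only [sub_sub_cancel, FunLike.coe_smul, Pi.smul_apply, smul_eq_mul, ← div_eq_inv_mul]
    gcongr
    linarith
  obtain ⟨y, hy, hΨy, hfar⟩ := hΔ (‖Ψ‖⁻¹ • Ψ) _ (norm_smul_inv_norm hΨ)
    (by rw [sub_pos, div_lt_one hΨpos]; linarith) hslice δ hδ
  refine ⟨y, hy, ?_, hfar⟩
  simpa [← div_eq_inv_mul, div_lt_div_iff_of_pos_right hΨpos] using hΨy

theorem exists_dual_mem_lt_apply_sub_apply (hΔ : IsDeltaPoint μ) (hμ : ‖μ‖ = 1) {s : Set X}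
    (hs : IsNorming s) (Ψ : Dual ℝ X) {δ : ℝ} (hδ : 0 < δ) :
    ∃ f : Dual ℝ X, ‖f‖ ≤ 1 ∧ 1 - δ ≤ f μ ∧ ∃ m ∈ s, Ψ μ + 1 - 3 * δ < Ψ m - f m := by
  have : Nontrivial X := nontrivial_of_ne μ 0 (by simp [← norm_ne_zero_iff, hμ])
  obtain ⟨y, hy, hΨy, hfar⟩ := hΔ.exists_far_of_sub_lt_apply hμ Ψ hδ
  obtain ⟨f, hf, hfμy⟩ := exists_dual_vector'' ℝ (μ - y)
  rw [map_sub, RCLike.ofReal_real_eq_id, id] at hfμy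
  have hfμ := abs_le.mp (abs_apply_le_one hf hμ.le)
  have hfy := abs_le.mp (abs_apply_le_one hf hy)
  have hχ : Ψ y - f y ≤ ‖Ψ - f‖ :=
    (le_abs_self _).trans ((Ψ - f).le_opNorm y |>.trans (mul_le_of_le_one_right (norm_nonneg _) hy))
  obtain ⟨m, hm, hχm⟩ := hs.exists_lt_apply (Ψ - f) (c := Ψ μ + 1 - 3 * δ) (by linarith)
  exact ⟨f, hf, by linarith, m, hm, hχm⟩

theorem exists_seq_mem_lt_apply_of_sum_le (hΔ : IsDeltaPoint μ) (hμ : ‖μ‖ = 1) {s : Set X}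
    (hs₁ : ∀ x ∈ s, ‖x‖ ≤ 1) (hs : IsNorming s) {φ : Dual ℝ X} (hφ : ‖φ‖ ≤ 1) {l d η : ℝ}
    (hl : 0 ≤ l) {δ : ℕ → ℝ} (hδ : ∀ k, 0 < δ k) (hδd : ∀ k, ∑ i ∈ Finset.range (k + 1), δ i ≤ d)
    (hη : l * (1 - φ μ) + 3 * d ≤ η) :
    ∃ (f : ℕ → Dual ℝ X) (m : ℕ → X), (∀ k, ‖f k‖ ≤ 1 ∧ m k ∈ s) ∧ ∀ k,
      l - η < l * φ (m k) ∧ (∀ i < k, 1 - η < f i (m k)) ∧ f k (m k) < -(1 - η) := by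
  obtain ⟨f, m, hfm⟩ := exists_seq_of_forall_exists_add_sum (l • φ)
    (P := fun k Ψ f x => ‖f‖ ≤ 1 ∧ 1 - δ k ≤ f μ ∧ x ∈ s ∧ Ψ μ + 1 - 3 * δ k < Ψ x - f x)
    fun k Ψ => by
      obtain ⟨f, hf, hfμ, x, hx, hΨx⟩ := hΔ.exists_dual_mem_lt_apply_sub_apply hμ hs Ψ (hδ k)
      exact ⟨f, x, hf, hfμ, hx, hΨx⟩
  have hslack : ∀ k, l + (Finset.range k).card + 1 - η <
      l * φ (m k) + ∑ i ∈ Finset.range k, f i (m k) - f k (m k) := fun k => by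
    obtain ⟨-, -, -, hk⟩ := hfm k
    have hfμ : ∑ i ∈ Finset.range k, (1 - δ i) ≤ ∑ i ∈ Finset.range k, f i μ :=
      Finset.sum_le_sum fun i _ => (hfm i).2.1
    simp only [Finset.sum_sub_distrib, Finset.sum_const, nsmul_eq_mul, mul_one, add_apply,
      FunLike.coe_sum, Finset.sum_apply, FunLike.coe_smul, Pi.smul_apply, smul_eq_mul] at hfμ hk ⊢
    have := hδd k
    rw [Finset.sum_range_succ] at this
    linarith [hδ k, Finset.sum_nonneg fun i (_ : i ∈ Finset.range k) => (hδ i).le]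
  refine ⟨f, m, fun k => ⟨(hfm k).1, (hfm k).2.2.1⟩, fun k => ?_⟩
  obtain ⟨hφm, hfim, hfkm⟩ := lt_apply_of_add_sum_sub_lt (hs₁ _ (hfm k).2.2.1) hφ
    (fun i _ => (hfm i).1) (hfm k).1 hl (hslack k)
  exact ⟨hφm, fun i hi => hfim i (Finset.mem_range.mpr hi), hfkm⟩

/-- The parameters: `∑ δₖ ≤ l β / 3`, so the slack `η = l (1 - φ μ) + l β` is at most `l α`, which
keeps the molecules in the slice, and at most `ε / 2`, which gives the separation. -/
theorem exists_seq_mem_slice_pairwise_two_sub_le_norm_sub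
    (hΔ : IsDeltaPoint μ) (hμ : ‖μ‖ = 1) {s : Set X} (hs₁ : ∀ x ∈ s, ‖x‖ ≤ 1)
    (hs : IsNorming s) {φ : Dual ℝ X} (hφ : ‖φ‖ ≤ 1) {α : ℝ} (hμα : 1 - α < φ μ)
    {ε : ℝ} (hε : 0 < ε) :
    ∃ m : ℕ → X, (∀ i, m i ∈ s ∧ 1 - α < φ (m i)) ∧
      Pairwise fun i j => 2 - ε ≤ ‖m i - m j‖ := by
  have hφμ := abs_le.mp (abs_apply_le_one hφ hμ.le)
  set l := ε / 8 with hl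
  have hl0 : 0 < l := by positivity
  set β := min (φ μ - (1 - α)) 1
  have hβ : 0 < β := lt_min (by linarith) one_pos
  have hδsum k : ∑ i ∈ Finset.range (k + 1), l * β / 6 * (1 / 2) ^ i ≤ l * β / 3 := by
    rw [← Finset.mul_sum]
    nlinarith [sum_geometric_two_le (k + 1), show 0 < l * β by positivity]
  obtain ⟨f, m, hfm, hm⟩ := hΔ.exists_seq_mem_lt_apply_of_sum_le hμ hs₁ hs hφ hl0.le
    (fun k => by positivity) hδsum (η := l * (1 - φ μ) + l * β) (by linarith)
  refine ⟨m, fun k => ⟨(hfm k).2, ?_⟩, ?_⟩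
  · have : l * β ≤ l * (φ μ - (1 - α)) := by gcongr; exact min_le_left _ _
    have : l * (1 - α) < l * φ (m k) := by linarith [(hm k).1]
    exact lt_of_mul_lt_mul_left this hl0.le
  · refine (pairwise_two_sub_le_norm_sub (fun i => (hfm i).1) (fun i j hij => (hm j).2.1 i hij)
      fun k => (hm k).2.2).mono ?_
    have : l * β ≤ l := mul_le_of_le_one_right hl0.le (min_le_right _ _)
    have : l * (1 - φ μ) ≤ l * 2 := by gcongr; linarith
    intro i j h
    linarith

end DeltaPaper.IsDeltaPoint

/-- Proposition 3.1. If `μ ∈ S_{F(M)}` is a Δ-point, then every slice of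
`B_{F(M)}` containing `μ` contains, for every `ε > 0`, a sequence of molecules that are
pairwise at distance at least `2 - ε` from each other. -/
theorem statement6 {M : Type*} [MetricSpace M] (z : M)
    (μ : ↥(FreeSpace M z)) (hμ : ‖μ‖ = 1) (hΔ : IsDeltaPoint μ) :
    ∀ ε > (0:ℝ), ∀ (φ : Dual ℝ ↥(FreeSpace M z)) (α : ℝ), ‖φ‖ = 1 → 0 < α → 1 - α < φ μ →
      ∃ u v : ℕ → M, (∀ i, u i ≠ v i) ∧
        (∀ i, ‖mol M z (u i) (v i)‖ ≤ 1 ∧ 1 - α < φ (mol M z (u i) (v i))) ∧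
        (∀ i j, i ≠ j → 2 - ε ≤ ‖mol M z (u i) (v i) - mol M z (u j) (v j)‖) := by
  intro ε hε φ α hφ _ hμα
  obtain ⟨m, hm, hsep⟩ := hΔ.exists_seq_mem_slice_pairwise_two_sub_le_norm_sub hμ
    (by rintro _ ⟨u, v, -, rfl⟩; exact norm_mol_le u v) isNorming_molecules hφ.le hμα hε
  choose u v huv hm_eq using fun i => (hm i).1
  refine ⟨u, v, huv, fun i => ⟨norm_mol_le _ _, hm_eq i ▸ (hm i).2⟩, fun i j hij => ?_⟩
  rw [hm_eq i, hm_eq j]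
  exact hsep hij
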